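/- arXiv:1308.0574 — 3 statements merged into one kernel-verified Lean document; each statement's English description precedes it below -/
import Mathlib

section
/- Let f ∈ ℤ[x_0, ..., x_{n+1}] be homogeneous of degree d, irreducible over ℚ but reducible over the algebraic closure of ℚ. Then there exists a homogeneous polynomial g ∈ ℤ[x_0, ..., x_{n+1}] of degree at most d, not divisible by f, that vanishes at every rational zero of f. -/
/-!
Over the algebraic closure, `f = A * B` with `A`, `B` forms of positive degree. Choosing a
`ℚ`-linear functional `φ` that does not kill every coefficient of `A` and applying it to the
coefficients gives a nonzero rational form `a` of the same degree with `a(x) = φ(A(x))` at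
rational points `x`, so `a` vanishes wherever `A` does; likewise `b` for `B`. The form `a * b`
has degree `d` and vanishes at every rational zero of `f`, and `f` cannot divide it, being prime
over `ℚ` and of larger degree than either factor. Clearing denominators gives `g`.
-/

open MvPolynomial

namespace MvPolynomial

variable {σ : Type*}

lemma homogeneousComponent_totalDegree_mul {R : Type*} [CommSemiring R]
    (a b : MvPolynomial σ R) :
    homogeneousComponent (a.totalDegree + b.totalDegree) (a * b) =
      homogeneousComponent a.totalDegree a * homogeneousComponent b.totalDegree b := by
  classical
  have hterm : ∀ u v : σ →₀ ℕ,
      ((if u.degree = a.totalDegree then coeff u a else 0) *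
        if v.degree = b.totalDegree then coeff v b else 0) =
      if u.degree + v.degree = a.totalDegree + b.totalDegree then coeff u a * coeff v b
        else 0 := by
    intro u v
    by_cases h : u.degree = a.totalDegree ∧ v.degree = b.totalDegree
    · simp [h.1, h.2]
    have : a.totalDegree < u.degree ∨ b.totalDegree < v.degree ∨
        u.degree + v.degree ≠ a.totalDegree + b.totalDegree := by omega
    rcases this with hu | hv | hne
    · simp [coeff_eq_zero_of_totalDegree_lt hu, hu.ne']
    · simp [coeff_eq_zero_of_totalDegree_lt hv, hv.ne']
    · grind
  ext m
  simp only [coeff_homogeneousComponent, coeff_mul, hterm]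
  rw [Finset.ite_sum_zero]
  refine Finset.sum_congr rfl fun x hx => ?_
  rw [← map_add, Finset.HasAntidiagonal.mem_antidiagonal.mp hx]

lemma totalDegree_ne_zero_of_not_isUnit {K : Type*} [Field K] {p : MvPolynomial σ K}
    (hp : p ≠ 0) (hu : ¬IsUnit p) : p.totalDegree ≠ 0 := by
  intro h
  rw [totalDegree_eq_zero_iff_eq_C] at h
  exact hu (h ▸ (isUnit_iff_ne_zero.mpr fun h0 => hp (by rw [h, h0, map_zero])).map C)

lemma IsHomogeneous.not_dvd_of_lt {R : Type*} [CommRing R] [IsDomain R]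
    {p q : MvPolynomial σ R} {d e : ℕ} (hp : p.IsHomogeneous d) (hp0 : p ≠ 0)
    (hq : q.IsHomogeneous e) (hq0 : q ≠ 0) (hlt : e < d) : ¬p ∣ q := fun h => by
  have := totalDegree_le_of_dvd_of_isDomain h hq0
  rw [hp.totalDegree hp0, hq.totalDegree hq0] at this
  omega

/- The factors `a`, `b` of `p` are themselves homogeneous, but it is simpler to note that `p` is
the product of their top-degree components. -/
lemma IsHomogeneous.exists_mul_of_not_irreducible {K : Type*} [Field K]
    {p : MvPolynomial σ K} {d : ℕ} (hp : p.IsHomogeneous d) (hp0 : p ≠ 0) (hu : ¬IsUnit p)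
    (hirr : ¬Irreducible p) :
    ∃ (A B : MvPolynomial σ K) (da db : ℕ), p = A * B ∧ A.IsHomogeneous da ∧
      B.IsHomogeneous db ∧ da + db = d ∧ 0 < da ∧ 0 < db := by
  obtain ⟨a, b, rfl, ha, hb⟩ : ∃ a b, p = a * b ∧ ¬IsUnit a ∧ ¬IsUnit b := by
    simpa [irreducible_iff, hu] using hirr
  have ha0 : a ≠ 0 := left_ne_zero_of_mul hp0
  have hb0 : b ≠ 0 := right_ne_zero_of_mul hp0
  have hd : a.totalDegree + b.totalDegree = d := by
    rw [← totalDegree_mul_of_isDomain ha0 hb0, hp.totalDegree hp0]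
  refine ⟨homogeneousComponent a.totalDegree a, homogeneousComponent b.totalDegree b,
    a.totalDegree, b.totalDegree, ?_, homogeneousComponent_isHomogeneous _ _,
    homogeneousComponent_isHomogeneous _ _, hd,
    Nat.pos_of_ne_zero (totalDegree_ne_zero_of_not_isUnit ha0 ha),
    Nat.pos_of_ne_zero (totalDegree_ne_zero_of_not_isUnit hb0 hb)⟩
  rw [← homogeneousComponent_totalDegree_mul, hd, homogeneousComponent_eq_self hp]

section LinearFunctional

variable {F A : Type*} [CommSemiring F] [CommSemiring A] [Algebra F A]

lemma eval_addMonoidAlgebraMap_linearMap (φ : A →ₗ[F] F) (P : MvPolynomial σ A)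
    (x : σ → F) :
    eval x (AddMonoidAlgebra.map φ.toAddMonoidHom P) = φ (eval (algebraMap F A ∘ x) P) := by
  induction P using MvPolynomial.induction_on' with
  | monomial m a =>
    have : AddMonoidAlgebra.map φ.toAddMonoidHom (monomial m a) = monomial m (φ a) :=
      AddMonoidAlgebra.map_single ..
    rw [this, eval_monomial, eval_monomial]
    simp only [Finsupp.prod, Function.comp_apply, ← map_pow, ← map_prod]
    rw [mul_comm, ← smul_eq_mul, ← map_smul, Algebra.smul_def, mul_comm]
  | add P Q hP hQ => rw [AddMonoidAlgebra.map_add, map_add, map_add, map_add, hP, hQ]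

lemma IsHomogeneous.exists_ne_zero_isHomogeneous_forall_eval_eq_zero
    [Module.Projective F A] {P : MvPolynomial σ A} {e : ℕ} (hP : P.IsHomogeneous e)
    (hP0 : P ≠ 0) :
    ∃ p : MvPolynomial σ F, p ≠ 0 ∧ p.IsHomogeneous e ∧
      ∀ x : σ → F, eval (algebraMap F A ∘ x) P = 0 → eval x p = 0 := by
  obtain ⟨m, hm⟩ := exists_coeff_ne_zero hP0
  obtain ⟨φ, hφ⟩ := Module.Projective.exists_dual_ne_zero F hm
  refine ⟨AddMonoidAlgebra.map φ.toAddMonoidHom P, ne_of_apply_ne (coeff m) ?_, ?_, ?_⟩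
  · simpa using hφ
  · intro n hn
    exact hP fun h => hn (by simp [h])
  · intro x hx
    rw [eval_addMonoidAlgebraMap_linearMap, hx, map_zero]

end LinearFunctional

lemma IsHomogeneous.exists_forall_eval_eq_zero_of_not_irreducible_map {F K : Type*} [Field F]
    [Field K] [Algebra F K] {p : MvPolynomial σ F} {d : ℕ} (hp : p.IsHomogeneous d)
    (hirr : Irreducible p) (hred : ¬Irreducible (map (algebraMap F K) p)) :
    ∃ q : MvPolynomial σ F, q.IsHomogeneous d ∧ ¬p ∣ q ∧
      ∀ x : σ → F, eval x p = 0 → eval x q = 0 := by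
  have hp0 : p ≠ 0 := hirr.ne_zero
  have hpK0 : map (algebraMap F K) p ≠ 0 := fun h =>
    hp0 (map_injective _ (algebraMap F K).injective (h.trans (map_zero _).symm))
  have hd : d ≠ 0 :=
    hp.totalDegree hp0 ▸ totalDegree_ne_zero_of_not_isUnit hp0 hirr.not_isUnit
  have hpKu : ¬IsUnit (map (algebraMap F K) p) := fun hu =>
    hd ((hp.map _).totalDegree hpK0 ▸ (isUnit_iff_totalDegree_of_isReduced.mp hu).2)
  obtain ⟨A, B, da, db, hAB, hA, hB, hdd, hda, hdb⟩ :=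
    (hp.map _).exists_mul_of_not_irreducible hpK0 hpKu hred
  rw [hAB] at hpK0
  obtain ⟨a, ha0, ha, hav⟩ :=
    hA.exists_ne_zero_isHomogeneous_forall_eval_eq_zero (F := F) (left_ne_zero_of_mul hpK0)
  obtain ⟨b, hb0, hb, hbv⟩ :=
    hB.exists_ne_zero_isHomogeneous_forall_eval_eq_zero (F := F) (right_ne_zero_of_mul hpK0)
  refine ⟨a * b, hdd ▸ ha.mul hb, fun h => ?_, fun x hx => ?_⟩
  · rcases hirr.prime.dvd_or_dvd h with h | h
    exacts [hp.not_dvd_of_lt hp0 ha ha0 (by omega) h, hp.not_dvd_of_lt hp0 hb hb0 (by omega) h]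
  · have hK : eval (algebraMap F K ∘ x) (A * B) = 0 := by
      rw [← hAB, eval_map, ← eval₂_comp, hx, map_zero]
    rw [map_mul, mul_eq_zero] at hK ⊢
    exact hK.imp (hav x) (hbv x)

lemma exists_map_algebraMap_eq_C_mul {R S : Type*} [CommRing R] [CommRing S] [Algebra R S]
    (M : Submonoid R) [IsLocalization M S] (q : MvPolynomial σ S) :
    ∃ b ∈ M, ∃ g : MvPolynomial σ R, map (algebraMap R S) g = C (algebraMap R S b) * q := by
  obtain ⟨⟨b, hb⟩, hint⟩ := IsLocalization.exist_integer_multiples_of_finset M q.coeffs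
  refine ⟨b, hb, mem_range_map_iff_coeffs_subset.mpr fun c hc => ?_⟩
  obtain ⟨m, hm, rfl⟩ := mem_coeffs_iff.mp hc
  rw [coeff_C_mul, ← Algebra.smul_def]
  refine hint _ (coeff_mem_coeffs m fun h => ?_)
  rw [mem_support_iff, coeff_C_mul, h, mul_zero] at hm
  exact hm rfl

end MvPolynomial

theorem stmt_6 (n d : ℕ) (f : MvPolynomial (Fin (n + 2)) ℤ)
    (hf : f.IsHomogeneous d)
    (hirr : Irreducible (f.map (Int.castRingHom ℚ)))
    (hred : ¬ Irreducible (f.map (Int.castRingHom (AlgebraicClosure ℚ)))) :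
    ∃ (g : MvPolynomial (Fin (n + 2)) ℤ) (e : ℕ), e ≤ d ∧ g.IsHomogeneous e ∧
      ¬ f ∣ g ∧
      ∀ x : Fin (n + 2) → ℚ, eval x (f.map (Int.castRingHom ℚ)) = 0 →
        eval x (g.map (Int.castRingHom ℚ)) = 0 := by
  obtain ⟨q, hq, hfq, hqv⟩ :=
    (hf.map _).exists_forall_eval_eq_zero_of_not_irreducible_map (K := AlgebraicClosure ℚ) hirr
      (by rwa [map_map, RingHom.ext_int (RingHom.comp _ _) (Int.castRingHom _)])
  obtain ⟨N, hN, g, hg⟩ := exists_map_algebraMap_eq_C_mul (nonZeroDivisors ℤ) q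
  rw [algebraMap_int_eq] at hg
  have hNu : IsUnit (C (N : ℚ) : MvPolynomial (Fin (n + 2)) ℚ) :=
    (isUnit_iff_ne_zero.mpr (by exact_mod_cast nonZeroDivisors.ne_zero hN)).map C
  have hgQ : (g.map (Int.castRingHom ℚ)).IsHomogeneous d := hg ▸ hq.C_mul _
  refine ⟨g, d, le_rfl, hgQ.of_map (RingHom.injective_int _), ?_, ?_⟩
  · exact fun hfg => hfq (hNu.dvd_mul_left.mp (hg ▸ map_dvd _ hfg))
  · intro x hx
    rw [hg, map_mul, hqv x hx, mul_zero]
end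

section
/- Let f ∈ ℤ[x_0, ..., x_{n+1}] be homogeneous of degree d with nonzero coefficient c_f of the monomial x_{n+1}^d, and let P = f·h for some nonzero homogeneous h ∈ ℤ[x_0, ..., x_{n+1}] of degree M − d. Then ‖P‖ ≥ |c_f|, where ‖P‖ denotes the maximum absolute value of the coefficients of P. -/
/-!
Order monomials colexicographically, i.e. comparing the exponent of the last variable first.
Then `x_{n+1}^d` dominates every monomial of degree `d`, so it bounds the leading monomial of the
homogeneous `f`, and the coefficient of `P = f * h` at `x_{n+1}^d` times the leading monomial of
`h` is `c_f` times the (nonzero, integral) leading coefficient of `h`.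
-/

open MvPolynomial MonomialOrder

namespace Finsupp

variable {σ : Type*}

theorem eq_single_of_degree_le_apply {b : σ →₀ ℕ} {i : σ} (h : b.degree ≤ b i) :
    b = single i (b i) := by
  have hsplit : b.degree = b i + (b.erase i).degree := by
    conv_lhs => rw [← single_add_erase i b]
    rw [map_add, degree_single]
  have herase : b.erase i = 0 := (degree_eq_zero_iff _).mp (by omega)
  calc b = single i (b i) + b.erase i := (single_add_erase i b).symm
    _ = single i (b i) := by rw [herase, add_zero]

theorem toColex_le_single_top_degree [LinearOrder σ] [OrderTop σ] (b : σ →₀ ℕ) :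
    toColex b ≤ toColex (single ⊤ b.degree) := by
  rcases (le_degree ⊤ b).lt_or_eq with hlt | heq
  · exact (Colex.lt_iff.mpr ⟨⊤, fun j hj => absurd hj not_top_lt, by simpa using hlt⟩).le
  · rw [← heq, ← eq_single_of_degree_le_apply heq.ge]

end Finsupp

noncomputable def MonomialOrder.colex {σ : Type*} [LinearOrder σ] [WellFoundedLT σ] :
    MonomialOrder σ where
  syn := Colex (σ →₀ ℕ)
  toSyn := { toEquiv := toColex, map_add' := toColex_add }
  toSyn_monotone := Finsupp.toColex_monotone

theorem MonomialOrder.colex_le_iff {σ : Type*} [LinearOrder σ] [WellFoundedLT σ]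
    {c d : σ →₀ ℕ} : c ≼[colex] d ↔ toColex c ≤ toColex d := Iff.rfl

theorem MvPolynomial.IsHomogeneous.colex_degree_le_single_top {σ R : Type*} [CommSemiring R]
    [LinearOrder σ] [WellFoundedLT σ] [OrderTop σ] {f : MvPolynomial σ R} {d : ℕ}
    (hf : f.IsHomogeneous d) : colex.degree f ≼[colex] Finsupp.single ⊤ d := by
  refine colex.degree_le_iff.mpr fun b hb => ?_
  have hdeg : b.degree = d := by
    simpa [Finsupp.degree_eq_weight_one, Pi.one_def] using hf (mem_support_iff.mp hb)
  rw [colex_le_iff, ← hdeg]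
  exact b.toColex_le_single_top_degree

theorem MonomialOrder.abs_coeff_le_abs_coeff_mul_add_degree {σ : Type*} (m : MonomialOrder σ)
    {f g : MvPolynomial σ ℤ} {a : σ →₀ ℕ} (ha : m.degree f ≼[m] a) (hg : g ≠ 0) :
    |f.coeff a| ≤ |(f * g).coeff (a + m.degree g)| := by
  rw [m.coeff_mul_of_add_of_degree_le ha le_rfl, abs_mul]
  exact le_mul_of_one_le_right (abs_nonneg _) (Int.one_le_abs (m.leadingCoeff_ne_zero_iff.mpr hg))

theorem stmt_9_general (n d : ℕ)
    (f h : MvPolynomial (Fin (n + 2)) ℤ)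
    (hf : f.IsHomogeneous d)
    (hh0 : h ≠ 0)
    (P : MvPolynomial (Fin (n + 2)) ℤ) (hP : P = f * h) :
    ∃ m : Fin (n + 2) →₀ ℕ,
      |f.coeff (Finsupp.single (Fin.last (n + 1)) d)| ≤ |P.coeff m| :=
  hP ▸ ⟨_, colex.abs_coeff_le_abs_coeff_mul_add_degree hf.colex_degree_le_single_top hh0⟩

theorem stmt_9 (n d M : ℕ) (hd : 0 < d) (hM : d ≤ M)
    (f h : MvPolynomial (Fin (n + 2)) ℤ)
    (hf : f.IsHomogeneous d)
    (hcf : f.coeff (Finsupp.single (Fin.last (n + 1)) d) ≠ 0)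
    (hh : h.IsHomogeneous (M - d)) (hh0 : h ≠ 0)
    (P : MvPolynomial (Fin (n + 2)) ℤ) (hP : P = f * h) :
    ∃ m : Fin (n + 2) →₀ ℕ,
      |f.coeff (Finsupp.single (Fin.last (n + 1)) d)| ≤ |P.coeff m| :=
  stmt_9_general n d f h hf hh0 P hP
end

section
/- There exists an absolute constant C such that for all x ≥ 2, |Σ_{p ≤ x} (log p)/p − log x| ≤ C, where the sum is over primes p ≤ x. -/
/-!
Legendre's formula gives `log n! = ∑_{p ≤ n} v_p(n!) log p` with
`n/p - 1 ≤ v_p(n!) ≤ n/(p - 1)`. Since `∑_{p ≤ n} log p ≤ n log 4` (Chebyshev) and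
`∑ log m / (m (m - 1))` converges, this yields
`log n! = n ∑_{p ≤ n} (log p)/p + O(n)`, while `log n! = n log n + O(n)` by Stirling.
Dividing by `n` gives the bound for integers; passing to real `x` costs at most `log 2`.
-/

open Finset Real Chebyshev
open scoped Nat

lemma Nat.primesLE_eq_filter_Iic (n : ℕ) : n.primesLE = (Iic n).filter Nat.Prime := by
  ext p; simp [Nat.primesLE_eq_filter_range]

lemma log_factorial_eq_sum_primesLE (n : ℕ) :
    log (n ! : ℝ) = ∑ p ∈ n.primesLE, ((n !).factorization p : ℝ) * log p := by
  rw [log_nat_eq_sum_factorization]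
  refine Finsupp.sum_of_support_subset _ (fun p hp => ?_) _ (fun _ _ => by simp)
  have hp' : p.Prime := Nat.prime_of_mem_primeFactors hp
  simpa [Nat.primesLE_eq_filter_range, Nat.lt_succ_iff, hp'] using
    hp'.dvd_factorial.mp (Nat.dvd_of_mem_primeFactors hp)

lemma div_le_factorization_factorial {p : ℕ} (hp : p.Prime) (n : ℕ) :
    n / p ≤ (n !).factorization p := by
  rw [Nat.factorization_factorial hp (Nat.lt_add_of_pos_right two_pos : p.log n < p.log n + 2)]
  simpa using single_le_sum (f := fun i => n / p ^ i) (fun _ _ => Nat.zero_le _)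
    (by simp : 1 ∈ Ico 1 (p.log n + 2))

lemma div_sub_one_le_factorization_factorial {p : ℕ} (hp : p.Prime) (n : ℕ) :
    (n : ℝ) / p - 1 ≤ (n !).factorization p := by
  calc (n : ℝ) / p - 1 ≤ ⌊(n : ℝ) / p⌋₊ := (Nat.sub_one_lt_floor _).le
    _ = (n / p : ℕ) := by rw [Nat.floor_div_eq_div]
    _ ≤ _ := by exact_mod_cast div_le_factorization_factorial hp n

lemma factorization_factorial_le_div_sub_one {p : ℕ} (hp : p.Prime) (n : ℕ) :
    ((n !).factorization p : ℝ) ≤ n / (p - 1) := by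
  calc ((n !).factorization p : ℝ) ≤ (n / (p - 1) : ℕ) := by
        exact_mod_cast Nat.factorization_factorial_le_div_pred hp n
    _ ≤ (n : ℝ) / (p - 1 : ℕ) := Nat.cast_div_le
    _ = n / (p - 1) := by rw [Nat.cast_sub hp.one_le, Nat.cast_one]

lemma log_div_mul_sub_one_nonneg (m : ℕ) : 0 ≤ log m / (m * (m - 1)) := by
  rcases lt_or_ge m 2 with hm | hm
  · interval_cases m <;> simp
  have hm' : (2 : ℝ) ≤ m := by exact_mod_cast hm
  exact div_nonneg (log_nonneg (by linarith)) (by nlinarith)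

lemma log_div_mul_sub_one_le (m : ℕ) :
    log m / (m * (m - 1)) ≤ 4 * (m : ℝ) ^ (-(3 / 2) : ℝ) := by
  rcases lt_or_ge m 2 with hm | hm
  · interval_cases m <;> simp
  have hm' : (2 : ℝ) ≤ m := by exact_mod_cast hm
  have hlog : log m ≤ 2 * (m : ℝ) ^ (1 / 2 : ℝ) := by
    have := log_le_rpow_div (Nat.cast_nonneg m) (by norm_num : (0 : ℝ) < 1 / 2)
    linarith [show (m : ℝ) ^ (1 / 2 : ℝ) / (1 / 2) = 2 * (m : ℝ) ^ (1 / 2 : ℝ) by ring]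
  calc log m / (m * (m - 1)) ≤ 2 * (m : ℝ) ^ (1 / 2 : ℝ) / (m ^ 2 / 2) :=
        div_le_div₀ (by positivity) hlog (by positivity) (by nlinarith)
    _ = 4 * (m : ℝ) ^ (-(3 / 2) : ℝ) := by
      rw [show (-(3 / 2) : ℝ) = 1 / 2 - (2 : ℕ) by norm_num, rpow_sub_natCast (by positivity)]
      ring

lemma summable_log_div_mul_sub_one : Summable fun m : ℕ => log m / (m * (m - 1)) :=
  .of_nonneg_of_le log_div_mul_sub_one_nonneg log_div_mul_sub_one_le
    ((summable_nat_rpow.mpr (by norm_num)).mul_left 4)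

lemma log_factorial_le (n : ℕ) : log (n ! : ℝ) ≤ n * log n := by
  rw [← log_pow]
  gcongr
  exact_mod_cast n.factorial_le_pow

lemma mul_log_sub_le_log_factorial {n : ℕ} (hn : n ≠ 0) :
    n * log n - n ≤ log (n ! : ℝ) := by
  have h2pi : 0 ≤ log (2 * π) := log_nonneg (by linarith [pi_gt_three])
  linarith [Stirling.le_log_factorial_stirling hn, log_natCast_nonneg n]

lemma mul_sum_log_div_sub_theta_le_log_factorial (n : ℕ) :
    n * ∑ p ∈ n.primesLE, log p / p - θ n ≤ log (n ! : ℝ) := by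
  rw [theta_eq_sum_primesLE_log, log_factorial_eq_sum_primesLE, mul_sum, ← sum_sub_distrib]
  refine sum_le_sum fun p hp => ?_
  have hp' : p.Prime := (Nat.mem_primesLE.mp hp).2
  calc (n : ℝ) * (log p / p) - log p = ((n : ℝ) / p - 1) * log p := by ring
    _ ≤ _ := mul_le_mul_of_nonneg_right (div_sub_one_le_factorization_factorial hp' n)
        (log_nonneg (by exact_mod_cast hp'.one_le))

lemma log_factorial_le_mul_sum_log_div_add (n : ℕ) :
    log (n ! : ℝ) ≤ n * ∑ p ∈ n.primesLE, log p / p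
      + n * ∑ p ∈ n.primesLE, log p / (p * (p - 1)) := by
  rw [log_factorial_eq_sum_primesLE, mul_sum, mul_sum, ← sum_add_distrib]
  refine sum_le_sum fun p hp => ?_
  have hp' : p.Prime := (Nat.mem_primesLE.mp hp).2
  have hp1 : (1 : ℝ) < p := by exact_mod_cast hp'.one_lt
  have hp1' : (p : ℝ) - 1 ≠ 0 := by linarith
  calc ((n !).factorization p : ℝ) * log p ≤ n / (p - 1) * log p :=
        mul_le_mul_of_nonneg_right (factorization_factorial_le_div_sub_one hp' n)
          (log_nonneg hp1.le)
    _ = _ := by field_simp; ring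

lemma sum_log_div_le_log_add_log_four {n : ℕ} (hn : n ≠ 0) :
    ∑ p ∈ n.primesLE, log p / p ≤ log n + log 4 := by
  have hn' : (0 : ℝ) < n := by positivity
  have hθ := theta_le_log4_mul_x hn'.le
  have := (mul_sum_log_div_sub_theta_le_log_factorial n).trans (log_factorial_le n)
  exact le_of_mul_le_mul_left (by linarith) hn'

lemma log_sub_tsum_le_sum_log_div {n : ℕ} (hn : n ≠ 0) :
    log n - 1 - ∑' m : ℕ, log m / (m * (m - 1)) ≤ ∑ p ∈ n.primesLE, log p / p := by
  have hn' : (0 : ℝ) < n := by positivity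
  have hT := mul_le_mul_of_nonneg_left (summable_log_div_mul_sub_one.sum_le_tsum
    n.primesLE fun m _ => log_div_mul_sub_one_nonneg m) hn'.le
  have := (mul_log_sub_le_log_factorial hn).trans (log_factorial_le_mul_sum_log_div_add n)
  exact le_of_mul_le_mul_left (by linarith) hn'

lemma exists_abs_sum_log_div_sub_log_le_nat :
    ∃ C, ∀ n : ℕ, n ≠ 0 → |∑ p ∈ n.primesLE, log p / p - log n| ≤ C := by
  have hK : 0 ≤ ∑' m : ℕ, log m / (m * (m - 1)) := tsum_nonneg log_div_mul_sub_one_nonneg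
  have hlog4 : 0 ≤ log 4 := log_nonneg (by norm_num)
  refine ⟨log 4 + 1 + ∑' m : ℕ, log m / (m * (m - 1)), fun n hn => abs_le.mpr ⟨?_, ?_⟩⟩
  · linarith [log_sub_tsum_le_sum_log_div hn]
  · linarith [sum_log_div_le_log_add_log_four hn]

lemma abs_log_sub_log_floor_le {x : ℝ} (hx : 1 ≤ x) : |log x - log ⌊x⌋₊| ≤ log 2 := by
  have hn : (1 : ℝ) ≤ ⌊x⌋₊ := by exact_mod_cast Nat.one_le_floor_iff x |>.mpr hx
  have hle : (⌊x⌋₊ : ℝ) ≤ x := Nat.floor_le (by linarith)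
  have hlt : x < ⌊x⌋₊ + 1 := Nat.lt_floor_add_one x
  rw [← log_div (by linarith) (by linarith),
    abs_of_nonneg (log_nonneg ((one_le_div₀ (by linarith)).mpr hle))]
  exact log_le_log (by positivity) ((div_le_iff₀ (by linarith)).mpr (by linarith))

theorem stmt_11 :
    ∃ C : ℝ, ∀ x : ℝ, 2 ≤ x →
      |(∑ p ∈ (Finset.Iic ⌊x⌋₊).filter Nat.Prime, Real.log p / p) - Real.log x| ≤ C := by
  obtain ⟨C, hC⟩ := exists_abs_sum_log_div_sub_log_le_nat
  refine ⟨C + log 2, fun x hx => ?_⟩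
  have hn : ⌊x⌋₊ ≠ 0 := (Nat.floor_pos.mpr (by linarith)).ne'
  rw [← Nat.primesLE_eq_filter_Iic]
  set S := ∑ p ∈ ⌊x⌋₊.primesLE, log p / p
  calc |S - log x| = |(S - log ⌊x⌋₊) - (log x - log ⌊x⌋₊)| := by ring_nf
    _ ≤ |S - log ⌊x⌋₊| + |log x - log ⌊x⌋₊| := abs_sub _ _
    _ ≤ C + log 2 := add_le_add (hC _ hn) (abs_log_sub_log_floor_le (by linarith))
end
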